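/- arXiv:1407.6838 — 5 statements merged into one kernel-verified Lean document; each statement's English description precedes it below -/
import Mathlib

section
/- Let F ∈ ℂ[x,y]_{2(d-2)} have nonzero catalecticant, and let f₁, f₂ be a basis of F^⊥ ∩ ℂ[x,y]_{d-1}. Then f₁ and f₂ have no common zero in ℂ² other than the origin (equivalently, Res(f₁,f₂) ≠ 0). -/
/-!
Let `x ≠ 0` be a common zero and `ℓ = x₁X₀ - x₀X₁`. For a form `f` of degree `k`,
`C(xᵢ)^k f ≡ f(x) Xᵢ^k` modulo `ℓ`, so `ℓ` divides both: `fᵢ = ℓ gᵢ` with `gᵢ` of degree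
`N = d - 2`. Apolarity turns `fᵢ ∘ F = 0` into `(x₁∂₀ - x₀∂₁)(gᵢ ∘ F) = 0`. This first-order
recursion determines the degree-`N` coefficients of a solution from a single one, so some
nontrivial `g = c₁g₁ + c₂g₂` has `g ∘ F` vanishing in degree `N`. In degree `N`, `g ↦ g ∘ F` is
the catalecticant matrix with its `i`-th row scaled by `(2N)!/((N-i)! i!)`, hence injective; so
`g = 0` and `c₁f₁ + c₂f₂ = ℓ g = 0`, contradicting independence.
-/

open MvPolynomial

/-- The differential operator `∂^m = ∏ᵢ (∂/∂xᵢ)^(mᵢ)`. -/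
noncomputable def diffOp {n : ℕ} (m : Fin n →₀ ℕ) : Module.End ℂ (MvPolynomial (Fin n) ℂ) :=
  ((List.finRange n).map fun i => ((pderiv i).toLinearMap : Module.End ℂ (MvPolynomial (Fin n) ℂ)) ^ (m i)).prod

/-- The polar (differentiation) action `h ∘ F = h(∂/∂y₁, …, ∂/∂yₙ) F`,
as a linear map in `h`.  `F^⊥ = ker (polarLM F)`. -/
noncomputable def polarLM {n : ℕ} (F : MvPolynomial (Fin n) ℂ) :
    MvPolynomial (Fin n) ℂ →ₗ[ℂ] MvPolynomial (Fin n) ℂ where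
  toFun h := ∑ m ∈ h.support, h.coeff m • diffOp m F
  map_add' a b := by
    have key : ∀ (g : MvPolynomial (Fin n) ℂ) (S : Finset ((Fin n) →₀ ℕ)), g.support ⊆ S →
        ∑ m ∈ g.support, g.coeff m • diffOp m F = ∑ m ∈ S, g.coeff m • diffOp m F := by
      intro g S hS
      refine Finset.sum_subset hS ?_
      intro m _ hm
      rw [MvPolynomial.notMem_support_iff.mp hm, zero_smul]
    show ∑ m ∈ (a + b).support, (a+b).coeff m • diffOp m F = (∑ m ∈ a.support, a.coeff m • diffOp m F) + ∑ m ∈ b.support, b.coeff m • diffOp m F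
    set S := (a + b).support ∪ a.support ∪ b.support with hs
    rw [key (a + b) S (by intro x hx; simp [hs, hx]),
      key a S (by intro x hx; simp [hs, hx]), key b S (by intro x hx; simp [hs, hx])]
    simp [MvPolynomial.coeff_add, add_smul, Finset.sum_add_distrib]
  map_smul' c h := by
    have key : ∀ (g : MvPolynomial (Fin n) ℂ) (S : Finset ((Fin n) →₀ ℕ)), g.support ⊆ S →
        ∑ m ∈ g.support, g.coeff m • diffOp m F = ∑ m ∈ S, g.coeff m • diffOp m F := by
      intro g S hS
      refine Finset.sum_subset hS ?_
      intro m _ hm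
      rw [MvPolynomial.notMem_support_iff.mp hm, zero_smul]
    show ∑ m ∈ (c • h).support, (c • h).coeff m • diffOp m F = (RingHom.id ℂ) c • ∑ m ∈ h.support, h.coeff m • diffOp m F
    rw [key (c • h) h.support (MvPolynomial.support_smul), Finset.smul_sum]
    simp [MvPolynomial.coeff_smul, mul_smul]

/-- The catalecticant of a binary form `F = ∑ C(2N,i) aᵢ x^(2N-i) y^i` of even degree `2N`:
the determinant of the `(N+1)×(N+1)` Hankel matrix `(a_(i+j))`. -/
noncomputable def catal (N : ℕ) (F : MvPolynomial (Fin 2) ℂ) : ℂ :=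
  (Matrix.of fun i j : Fin (N + 1) =>
    F.coeff (Finsupp.single 0 (2 * N - ((i : ℕ) + j)) + Finsupp.single 1 ((i : ℕ) + j))
      / (Nat.choose (2 * N) ((i : ℕ) + j) : ℂ)).det

namespace MvPolynomial

variable {σ R : Type*}

section CommSemiring

variable [CommSemiring R]

theorem IsHomogeneous.aeval_mul_left {S : Type*} [CommSemiring S] [Algebra R S]
    {f : MvPolynomial σ R} {k : ℕ} (hf : f.IsHomogeneous k) (t : S) (y : σ → S) :
    MvPolynomial.aeval (fun j => t * y j) f = t ^ k * MvPolynomial.aeval y f := by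
  conv_lhs => rw [f.as_sum]
  conv_rhs => rw [f.as_sum]
  simp only [map_sum, Finset.mul_sum, aeval_monomial, mul_pow, Finsupp.prod_mul]
  refine Finset.sum_congr rfl fun m hm => ?_
  rw [← hf (mem_support_iff.mp hm), Finsupp.weight_apply, Finsupp.prod,
    Finset.prod_pow_eq_pow_sum]
  simp only [Finsupp.sum, Pi.one_apply, smul_eq_mul, mul_one]
  ring

attribute [local instance] MvPolynomial.gradedAlgebra in
theorem IsHomogeneous.homogeneousComponent_add_mul {ℓ : MvPolynomial σ R} {e : ℕ}
    (hℓ : ℓ.IsHomogeneous e) (n : ℕ) (g : MvPolynomial σ R) :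
    homogeneousComponent (e + n) (ℓ * g) = ℓ * homogeneousComponent n g := by
  have := DirectSum.coe_decompose_mul_of_left_mem_of_le (𝒜 := homogeneousSubmodule σ R) (b := g)
    hℓ (Nat.le_add_right e n)
  rwa [← DirectSum.Decomposition.decompose'_eq, decomposition.decompose'_apply,
    decomposition.decompose'_apply, Nat.add_sub_cancel_left] at this

theorem pderiv_comm (i j : σ) (p : MvPolynomial σ R) :
    pderiv i (pderiv j p) = pderiv j (pderiv i p) := by
  classical
  ext m
  simp only [coeff_pderiv]
  rcases eq_or_ne i j with rfl | hij
  · rfl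
  · simp only [Finsupp.add_apply, Finsupp.single_apply, if_neg hij, if_neg hij.symm, add_zero]
    rw [add_right_comm m]
    ring

theorem coeff_pderiv_pow (i : σ) (s : ℕ) (p : MvPolynomial σ R) (u : σ →₀ ℕ) :
    coeff u (((pderiv i).toLinearMap ^ s) p) =
      (u i + s).descFactorial s * coeff (u + Finsupp.single i s) p := by
  induction s generalizing u with
  | zero => simp
  | succ s ih =>
    rw [pow_succ', Module.End.mul_apply, Derivation.coeFn_coe, coeff_pderiv, ih, add_assoc,
      ← Finsupp.single_add, Nat.descFactorial_succ, Finsupp.add_apply, Finsupp.single_eq_same,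
      show u i + (s + 1) - s = u i + 1 by omega, add_comm 1 s, ← add_assoc, add_right_comm]
    push_cast
    ring

end CommSemiring

theorem IsHomogeneous.C_pow_mul_sub_X_pow_mul_C_eval_mem [CommRing R]
    {I : Ideal (MvPolynomial σ R)} {x : σ → R} {i : σ}
    (hI : ∀ j, C (x i) * X j - X i * C (x j) ∈ I) {f : MvPolynomial σ R} {k : ℕ}
    (hf : f.IsHomogeneous k) :
    C (x i) ^ k * f - X i ^ k * C (eval x f) ∈ I := by
  -- both sides come from substituting `X ↦ x i • X` and `X ↦ X i • x`, which agree modulo `I`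
  have hcomp : (Ideal.Quotient.mkₐ R I).comp (MvPolynomial.aeval fun j => C (x i) * X j) =
      (Ideal.Quotient.mkₐ R I).comp (MvPolynomial.aeval fun j => X i * C (x j)) := by
    ext j
    simpa using Ideal.Quotient.eq.mpr (hI j)
  have hC : MvPolynomial.aeval (fun j => (C (x j) : MvPolynomial σ R)) f = C (eval x f) := by
    rw [aeval_def, eval, coe_eval₂Hom, eval₂_comp_left]
    rfl
  have := AlgHom.congr_fun hcomp f
  rw [AlgHom.comp_apply, AlgHom.comp_apply, hf.aeval_mul_left, hf.aeval_mul_left,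
    aeval_X_left_apply, hC, Ideal.Quotient.mkₐ_eq_mk] at this
  exact Ideal.Quotient.eq.mp this

end MvPolynomial

theorem Fin.two_finsupp_eq_single_add_single {M : Type*} [AddCommMonoid M] {i j : Fin 2}
    (hij : i ≠ j) (u : Fin 2 →₀ M) : u = Finsupp.single i (u i) + Finsupp.single j (u j) := by
  ext l
  fin_cases i <;> fin_cases j <;> fin_cases l <;> simp_all

theorem Fin.two_finsupp_degree {M : Type*} [AddCommMonoid M] {i j : Fin 2} (hij : i ≠ j)
    (u : Fin 2 →₀ M) : u.degree = u i + u j := by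
  conv_lhs => rw [Fin.two_finsupp_eq_single_add_single hij u]
  simp

noncomputable def linearFormVanishingAt {R : Type*} [CommRing R] (x : Fin 2 → R) :
    MvPolynomial (Fin 2) R :=
  C (x 1) * X 0 - C (x 0) * X 1

theorem isHomogeneous_linearFormVanishingAt {R : Type*} [CommRing R] (x : Fin 2 → R) :
    (linearFormVanishingAt x).IsHomogeneous 1 :=
  (isHomogeneous_C_mul_X _ _).sub (isHomogeneous_C_mul_X _ _)

theorem exists_eq_linearFormVanishingAt_mul {K : Type*} [Field K] {f : MvPolynomial (Fin 2) K}
    {k : ℕ} (hf : f.IsHomogeneous (k + 1)) {x : Fin 2 → K} (hfx : eval x f = 0) (hx : x ≠ 0) :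
    ∃ g : MvPolynomial (Fin 2) K, g.IsHomogeneous k ∧ f = linearFormVanishingAt x * g := by
  obtain ⟨i, hi⟩ := Function.ne_iff.mp hx
  have hI : ∀ j, C (x i) * X j - X i * C (x j) ∈ Ideal.span {linearFormVanishingAt x} := by
    intro j
    rw [Ideal.mem_span_singleton, linearFormVanishingAt]
    fin_cases i <;> fin_cases j <;> dsimp only [Fin.zero_eta, Fin.mk_one]
    exacts [⟨0, by ring⟩, ⟨-1, by ring⟩, ⟨1, by ring⟩, ⟨0, by ring⟩]
  have hdvd := hf.C_pow_mul_sub_X_pow_mul_C_eval_mem hI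
  rw [hfx, map_zero, mul_zero, sub_zero, Ideal.mem_span_singleton,
    (((Ne.isUnit hi).map C).pow _).dvd_mul_left] at hdvd
  obtain ⟨g, hg⟩ := hdvd
  refine ⟨homogeneousComponent k g, homogeneousComponent_isHomogeneous _ _, ?_⟩
  rw [← (isHomogeneous_linearFormVanishingAt x).homogeneousComponent_add_mul, ← hg, add_comm,
    homogeneousComponent_eq_self hf]

theorem polarLM_monomial {n : ℕ} (F : MvPolynomial (Fin n) ℂ) (m : Fin n →₀ ℕ) (c : ℂ) :
    polarLM F (monomial m c) = c • diffOp m F := by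
  rcases eq_or_ne c 0 with rfl | hc
  · simp
  · simp [polarLM, support_monomial, hc]

theorem diffOp_eq_mul (m : Fin 2 →₀ ℕ) :
    diffOp m = (pderiv 0).toLinearMap ^ m 0 * (pderiv 1).toLinearMap ^ m 1 := by
  simp [diffOp, List.finRange_succ]

theorem diffOp_single_add (i : Fin 2) (m : Fin 2 →₀ ℕ) :
    diffOp (Finsupp.single i 1 + m) = (pderiv i).toLinearMap * diffOp m := by
  have hcomm : Commute ((pderiv 0).toLinearMap : Module.End ℂ (MvPolynomial (Fin 2) ℂ))
      (pderiv 1).toLinearMap :=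
    LinearMap.ext fun f => pderiv_comm 0 1 f
  fin_cases i
  · simp only [diffOp_eq_mul, Finsupp.coe_add, Pi.add_apply]
    simp [add_comm 1, pow_succ', mul_assoc]
  · simp only [diffOp_eq_mul, Finsupp.coe_add, Pi.add_apply]
    simp [add_comm 1, pow_succ', ← mul_assoc, (hcomm.pow_left _).eq]

theorem polarLM_X_mul (F : MvPolynomial (Fin 2) ℂ) (i : Fin 2) (h : MvPolynomial (Fin 2) ℂ) :
    polarLM F (X i * h) = pderiv i (polarLM F h) := by
  induction h using MvPolynomial.induction_on' with
  | add p q hp hq => rw [mul_add, map_add, hp, hq, map_add, map_add]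
  | monomial m c =>
    rw [X, monomial_mul, one_mul, polarLM_monomial, polarLM_monomial, diffOp_single_add,
      Module.End.mul_apply, ← LinearMap.map_smul, Derivation.coeFn_coe]

theorem polarLM_linearFormVanishingAt_mul (F : MvPolynomial (Fin 2) ℂ) (x : Fin 2 → ℂ)
    (g : MvPolynomial (Fin 2) ℂ) :
    polarLM F (linearFormVanishingAt x * g) =
      x 1 • pderiv 0 (polarLM F g) - x 0 • pderiv 1 (polarLM F g) := by
  simp [linearFormVanishingAt, sub_mul, ← smul_eq_C_mul, polarLM_X_mul]

theorem coeff_diffOp (m u : Fin 2 →₀ ℕ) (F : MvPolynomial (Fin 2) ℂ) :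
    coeff u (diffOp m F) =
      (u 0 + m 0).descFactorial (m 0) * (u 1 + m 1).descFactorial (m 1) * coeff (u + m) F := by
  rw [diffOp_eq_mul, Module.End.mul_apply, coeff_pderiv_pow, coeff_pderiv_pow, add_assoc,
    ← Fin.two_finsupp_eq_single_add_single zero_ne_one m]
  simp only [Finsupp.coe_add, Pi.add_apply, Finsupp.single_eq_of_ne one_ne_zero, add_zero]
  ring

section DirectionalKernel

variable {K : Type*} [Field K] [CharZero K]

theorem homogeneousComponent_eq_zero_of_pderiv {i j : Fin 2} (hij : i ≠ j) {a : K} (ha : a ≠ 0)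
    (b : K) {h : MvPolynomial (Fin 2) K} (hD : a • pderiv i h + b • pderiv j h = 0) {N : ℕ}
    (hN : coeff (Finsupp.single j N) h = 0) : homogeneousComponent N h = 0 := by
  have hrec : ∀ p r : ℕ, a * (p + 1) * coeff (Finsupp.single i (p + 1) + Finsupp.single j r) h +
      b * (r + 1) * coeff (Finsupp.single i p + Finsupp.single j (r + 1)) h = 0 := by
    intro p r
    have := congrArg (coeff (Finsupp.single i p + Finsupp.single j r)) hD
    simp only [coeff_add, coeff_smul, coeff_pderiv, coeff_zero, smul_eq_mul, Finsupp.coe_add,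
      Pi.add_apply, Finsupp.single_eq_same, Finsupp.single_eq_of_ne hij,
      Finsupp.single_eq_of_ne hij.symm, add_zero, zero_add] at this
    rw [add_right_comm, ← Finsupp.single_add, add_assoc, ← Finsupp.single_add] at this
    linear_combination this
  have hvanish : ∀ p ≤ N, coeff (Finsupp.single i p + Finsupp.single j (N - p)) h = 0 := by
    intro p
    induction p with
    | zero => simpa using hN
    | succ p ih =>
      intro hp
      have := hrec p (N - (p + 1))
      rw [show N - (p + 1) + 1 = N - p by omega, ih (by omega), mul_zero, add_zero] at this
      exact (mul_eq_zero.mp this).resolve_left (mul_ne_zero ha (by exact_mod_cast p.succ_ne_zero))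
  ext u
  rw [coeff_homogeneousComponent, coeff_zero]
  split_ifs with hu
  · rw [Fin.two_finsupp_degree hij] at hu
    rw [Fin.two_finsupp_eq_single_add_single hij u, ← hvanish (u i) (by omega), ← hu,
      Nat.add_sub_cancel_left]
  · rfl

theorem not_linearIndependent_homogeneousComponent_of_pderiv {x : Fin 2 → K} (hx : x ≠ 0)
    (N : ℕ) {h₁ h₂ : MvPolynomial (Fin 2) K}
    (hD₁ : x 1 • pderiv 0 h₁ - x 0 • pderiv 1 h₁ = 0)
    (hD₂ : x 1 • pderiv 0 h₂ - x 0 • pderiv 1 h₂ = 0) :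
    ¬ LinearIndependent K ![homogeneousComponent N h₁, homogeneousComponent N h₂] := by
  obtain ⟨i, j, a, b, hij, ha, hD⟩ : ∃ (i j : Fin 2) (a b : K), i ≠ j ∧ a ≠ 0 ∧
      ∀ h : MvPolynomial (Fin 2) K,
        x 1 • pderiv 0 h - x 0 • pderiv 1 h = a • pderiv i h + b • pderiv j h := by
    by_cases hx₁ : x 1 = 0
    · have hx₀ : x 0 ≠ 0 := fun hx₀ => hx (funext fun l => by fin_cases l <;> assumption)
      exact ⟨1, 0, -x 0, x 1, one_ne_zero, neg_ne_zero.mpr hx₀, fun h => by module⟩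
    · exact ⟨0, 1, x 1, -x 0, zero_ne_one, hx₁, fun h => by module⟩
  rw [hD] at hD₁ hD₂
  rw [LinearIndependent.pair_iff]
  push Not
  by_cases h₁N : coeff (Finsupp.single j N) h₁ = 0
  · exact ⟨1, 0, by simp [homogeneousComponent_eq_zero_of_pderiv hij ha b hD₁ h₁N], by simp⟩
  · refine ⟨coeff (Finsupp.single j N) h₂, -coeff (Finsupp.single j N) h₁, ?_,
      fun _ => neg_ne_zero.mpr h₁N⟩
    rw [← map_smul, ← map_smul, ← map_add]
    refine homogeneousComponent_eq_zero_of_pderiv hij ha b ?_ ?_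
    · simp only [map_add, Derivation.map_smul]
      linear_combination (norm := module) coeff (Finsupp.single j N) h₂ • hD₁ -
        coeff (Finsupp.single j N) h₁ • hD₂
    · simp only [coeff_add, coeff_smul, smul_eq_mul]
      ring

end DirectionalKernel

theorem Nat.descFactorial_mul_descFactorial_mul_choose_mul {N i j : ℕ} (hi : i ≤ N) (hj : j ≤ N) :
    (2 * N - (i + j)).descFactorial (N - j) * (i + j).descFactorial j * (2 * N).choose (i + j) *
      ((N - i).factorial * i.factorial) = (2 * N).factorial := by
  have h₁ := Nat.factorial_mul_descFactorial (show N - j ≤ 2 * N - (i + j) by omega)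
  have h₂ := Nat.factorial_mul_descFactorial (Nat.le_add_left j i)
  rw [show 2 * N - (i + j) - (N - j) = N - i by omega] at h₁
  rw [Nat.add_sub_cancel] at h₂
  rw [← Nat.choose_mul_factorial_mul_factorial (show i + j ≤ 2 * N by omega), ← h₁, ← h₂]
  ring

noncomputable def binExp (N : ℕ) (j : Fin (N + 1)) : Fin 2 →₀ ℕ :=
  Finsupp.single 0 (N - (j : ℕ)) + Finsupp.single 1 (j : ℕ)

theorem degree_binExp (N : ℕ) (j : Fin (N + 1)) : (binExp N j).degree = N := by
  simp only [binExp, map_add, Finsupp.degree_single]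
  omega

theorem MvPolynomial.IsHomogeneous.eq_sum_binExp {R : Type*} [CommSemiring R]
    {q : MvPolynomial (Fin 2) R} {N : ℕ} (hq : q.IsHomogeneous N) :
    q = ∑ j : Fin (N + 1), monomial (binExp N j) (coeff (binExp N j) q) := by
  ext u
  rw [coeff_sum]
  simp only [coeff_monomial]
  by_cases hu : u.degree = N
  · rw [Fin.two_finsupp_degree zero_ne_one] at hu
    have hu' : binExp N ⟨u 1, by omega⟩ = u := by
      conv_rhs => rw [Fin.two_finsupp_eq_single_add_single zero_ne_one u]
      show Finsupp.single 0 (N - u 1) + Finsupp.single 1 (u 1) = _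
      rw [← hu, Nat.add_sub_cancel]
    rw [Finset.sum_eq_single ⟨u 1, by omega⟩, if_pos hu', hu']
    · intro j _ hj
      refine if_neg fun h => hj (Fin.ext ?_)
      simpa [binExp] using congrArg (· 1) h
    · simp
  · rw [hq.coeff_eq_zero hu]
    refine (Finset.sum_eq_zero fun j _ => if_neg ?_).symm
    rintro rfl
    exact hu (degree_binExp N j)

theorem coeff_binExp_diffOp_binExp (F : MvPolynomial (Fin 2) ℂ) {N : ℕ} (i j : Fin (N + 1)) :
    coeff (binExp N i) (diffOp (binExp N j) F) =
      (2 * N).factorial / ((N - i).factorial * (i : ℕ).factorial : ℂ) *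
        (coeff (Finsupp.single 0 (2 * N - (i + j)) + Finsupp.single 1 ((i : ℕ) + j)) F /
          (2 * N).choose (i + j)) := by
  have hi := Nat.lt_succ_iff.mp i.isLt
  have hj := Nat.lt_succ_iff.mp j.isLt
  have hexp : binExp N i + binExp N j =
      Finsupp.single (0 : Fin 2) (2 * N - (i + j)) + Finsupp.single 1 ((i : ℕ) + j) := by
    rw [binExp, binExp, add_add_add_comm, ← Finsupp.single_add, ← Finsupp.single_add,
      show N - i + (N - j) = 2 * N - (i + j) by omega]
  have hchoose : ((2 * N).choose (i + j) : ℂ) ≠ 0 := by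
    exact_mod_cast (Nat.choose_pos (show (i : ℕ) + j ≤ 2 * N by omega)).ne'
  have hfact : ((N - i).factorial * (i : ℕ).factorial : ℂ) ≠ 0 := by
    norm_num [Nat.factorial_ne_zero]
  have key : (((2 * N - (i + j)).descFactorial (N - j) * ((i : ℕ) + j).descFactorial j *
      (2 * N).choose (i + j) * ((N - i).factorial * (i : ℕ).factorial) : ℕ) : ℂ) =
      (2 * N).factorial :=
    congrArg _ (Nat.descFactorial_mul_descFactorial_mul_choose_mul hi hj)
  rw [coeff_diffOp, hexp]
  simp only [binExp, Finsupp.coe_add, Pi.add_apply, Finsupp.single_eq_same,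
    Finsupp.single_eq_of_ne zero_ne_one, Finsupp.single_eq_of_ne zero_ne_one.symm, add_zero,
    zero_add, show N - i + (N - j) = 2 * N - (i + j) by omega]
  push_cast at key
  rw [eq_comm, div_mul_div_comm, div_eq_iff (mul_ne_zero hfact hchoose)]
  linear_combination
    -(coeff (Finsupp.single 0 (2 * N - (i + j)) + Finsupp.single 1 ((i : ℕ) + j)) F) * key

theorem eq_zero_of_homogeneousComponent_polarLM_eq_zero {N : ℕ} {F : MvPolynomial (Fin 2) ℂ}
    (hcat : catal N F ≠ 0) {q : MvPolynomial (Fin 2) ℂ} (hq : q.IsHomogeneous N)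
    (hFq : homogeneousComponent N (polarLM F q) = 0) : q = 0 := by
  set M : Matrix (Fin (N + 1)) (Fin (N + 1)) ℂ :=
    Matrix.of fun i j => coeff (binExp N i) (diffOp (binExp N j) F)
  have hM : M = Matrix.diagonal (fun i : Fin (N + 1) =>
      (2 * N).factorial / ((N - i).factorial * (i : ℕ).factorial : ℂ)) *
      Matrix.of fun i j : Fin (N + 1) =>
        F.coeff (Finsupp.single 0 (2 * N - ((i : ℕ) + j)) + Finsupp.single 1 ((i : ℕ) + j)) /
          (Nat.choose (2 * N) ((i : ℕ) + j) : ℂ) := by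
    ext i j
    rw [Matrix.diagonal_mul]
    exact coeff_binExp_diffOp_binExp F i j
  have hdet : M.det ≠ 0 := by
    rw [hM, Matrix.det_mul, Matrix.det_diagonal]
    refine mul_ne_zero (Finset.prod_ne_zero_iff.mpr fun i _ => ?_) hcat
    norm_num [Nat.factorial_ne_zero]
  have hMq : M.mulVec (fun j => coeff (binExp N j) q) = 0 := by
    ext i
    have := congrArg (coeff (binExp N i)) hFq
    rw [coeff_homogeneousComponent, if_pos (degree_binExp N i), hq.eq_sum_binExp, map_sum,
      coeff_sum] at this
    simpa [Matrix.mulVec, dotProduct, polarLM_monomial, mul_comm, M] using this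
  have hcoeff := Matrix.eq_zero_of_mulVec_eq_zero hdet hMq
  rw [hq.eq_sum_binExp]
  exact Finset.sum_eq_zero fun j _ => by
    rw [show coeff (binExp N j) q = 0 from congrFun hcoeff j, map_zero]

theorem perp_basis_no_common_zero_general (d : ℕ) (hd : 3 ≤ d) (F : MvPolynomial (Fin 2) ℂ)
    (hcat : catal (d - 2) F ≠ 0)
    (f₁ f₂ : MvPolynomial (Fin 2) ℂ)
    (hf₁ : f₁.IsHomogeneous (d - 1)) (hf₂ : f₂.IsHomogeneous (d - 1))
    (hp₁ : polarLM F f₁ = 0) (hp₂ : polarLM F f₂ = 0)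
    (hind : LinearIndependent ℂ ![f₁, f₂]) :
    ∀ x : Fin 2 → ℂ, eval x f₁ = 0 → eval x f₂ = 0 → x = 0 := by
  intro x hx₁ hx₂
  by_contra hx
  rw [show d - 1 = d - 2 + 1 by omega] at hf₁ hf₂
  obtain ⟨g₁, hg₁, rfl⟩ := exists_eq_linearFormVanishingAt_mul hf₁ hx₁ hx
  obtain ⟨g₂, hg₂, rfl⟩ := exists_eq_linearFormVanishingAt_mul hf₂ hx₂ hx
  rw [polarLM_linearFormVanishingAt_mul] at hp₁ hp₂
  refine not_linearIndependent_homogeneousComponent_of_pderiv hx (d - 2) hp₁ hp₂ ?_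
  rw [LinearIndependent.pair_iff] at hind ⊢
  intro s t hst
  have hg : s • g₁ + t • g₂ = 0 := by
    refine eq_zero_of_homogeneousComponent_polarLM_eq_zero hcat
      ((homogeneousSubmodule _ _ _).add_mem (Submodule.smul_mem _ s hg₁)
        (Submodule.smul_mem _ t hg₂)) ?_
    simpa only [map_add, map_smul] using hst
  exact hind s t (by rw [← mul_smul_comm, ← mul_smul_comm, ← mul_add, hg, mul_zero])

/-- If `F` is a binary form of degree `2(d-2)` with nonzero catalecticant and `f₁, f₂` is a
basis of `F^⊥ ∩ ℂ[x,y]_(d-1)`, then `f₁` and `f₂` have no common zero besides the origin. -/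
theorem perp_basis_no_common_zero (d : ℕ) (hd : 3 ≤ d) (F : MvPolynomial (Fin 2) ℂ)
    (hF : F.IsHomogeneous (2 * (d - 2))) (hcat : catal (d - 2) F ≠ 0)
    (f₁ f₂ : MvPolynomial (Fin 2) ℂ)
    (hf₁ : f₁.IsHomogeneous (d - 1)) (hf₂ : f₂.IsHomogeneous (d - 1))
    (hp₁ : polarLM F f₁ = 0) (hp₂ : polarLM F f₂ = 0)
    (hind : LinearIndependent ℂ ![f₁, f₂]) :
    ∀ x : Fin 2 → ℂ, eval x f₁ = 0 → eval x f₂ = 0 → x = 0 :=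
  perp_basis_no_common_zero_general d hd F hcat f₁ f₂ hf₁ hf₂ hp₁ hp₂ hind
end

section
/- Let h₁, h₂ ∈ ℂ[x,y] be binary forms of degree m ≥ 2 with no common linear factor, and let l₁, l₂ be linear forms with l₁ ∣ h₁ and l₂ ∣ h₂. Then (h₁/l₁)(h₂/l₂) does not lie in the ℂ[x,y]_{m-2}-span of h₁ and h₂, i.e., there are no forms a₁, a₂ of degree m−2 with (h₁/l₁)(h₂/l₂) = a₁h₁ + a₂h₂. -/
/-!
Write `hᵢ = lᵢ qᵢ`. Reducing `q₁ q₂ = a₁ l₁ q₁ + a₂ l₂ q₂` modulo the prime `l₂`, which does not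
divide `q₁`, gives `q₂ - a₁ l₁ = l₂ t` with `t` a form of degree `m - 2`, and then `t q₁ = a₂ q₂`.
Over `ℂ` every binary form splits into linear forms, so `q₂` is coprime to `q₁` and hence divides
`t`; for degree reasons `t = 0`. But then `l₁ ∣ q₂`, a common linear factor of `h₁` and `h₂`.
-/

namespace MvPolynomial

section CommSemiring

variable {σ R : Type*} [CommSemiring R] {f g : MvPolynomial σ R} {d n : ℕ}

attribute [local instance] gradedAlgebra in
theorem IsHomogeneous.homogeneousComponent_add_mul_s12 (hf : f.IsHomogeneous d)
    (g : MvPolynomial σ R) (i : ℕ) :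
    homogeneousComponent (d + i) (f * g) = f * homogeneousComponent i g := by
  rw [← decomposition.decompose'_apply, ← decomposition.decompose'_apply]
  exact DirectSum.coe_decompose_mul_add_of_left_mem (homogeneousSubmodule σ R)
    ((mem_homogeneousSubmodule d f).2 hf)

theorem IsHomogeneous.of_mul_left [NoZeroDivisors R] (hf : f.IsHomogeneous d) (hf0 : f ≠ 0)
    (hfg : (f * g).IsHomogeneous (d + n)) : g.IsHomogeneous n := by
  rw [← sum_homogeneousComponent g]
  refine IsHomogeneous.sum _ _ _ fun i _ ↦ ?_
  obtain rfl | hi := eq_or_ne i n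
  · exact homogeneousComponent_isHomogeneous i g
  · have h := hf.homogeneousComponent_add_mul_s12 g i
    rw [homogeneousComponent_of_mem hfg, if_neg (by omega)] at h
    rw [(mul_eq_zero.1 h.symm).resolve_left hf0]
    exact isHomogeneous_zero _ _ _

theorem IsHomogeneous.eq_zero_of_dvd_of_lt [NoZeroDivisors R] {t : MvPolynomial σ R} {k : ℕ}
    (hf : f.IsHomogeneous n) (hf0 : f ≠ 0) (ht : t.IsHomogeneous k) (hkn : k < n) (h : f ∣ t) :
    t = 0 := by
  by_contra ht0
  obtain ⟨c, rfl⟩ := h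
  have hc0 : c ≠ 0 := by rintro rfl; simp at ht0
  have h := totalDegree_mul_of_isDomain hf0 hc0
  rw [ht.totalDegree ht0, hf.totalDegree hf0] at h
  omega

theorem IsHomogeneous.natDegree_aeval_X_one_le {p : MvPolynomial (Fin 2) R}
    (hp : p.IsHomogeneous n) :
    (MvPolynomial.aeval ![(Polynomial.X : Polynomial R), 1] p).natDegree ≤ n := by
  rw [p.as_sum, map_sum]
  refine Polynomial.natDegree_sum_le_of_forall_le _ _ fun e he ↦ ?_
  have he0 : e 0 ≤ n :=
    (Finsupp.le_degree 0 e).trans_eq (hp.degree_eq_sum_deg_support he).symm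
  rw [aeval_monomial, Finsupp.prod_fintype _ _ (by simp), Fin.prod_univ_two]
  simp only [Matrix.cons_val_zero, Matrix.cons_val_one, one_pow, mul_one]
  exact (Polynomial.natDegree_C_mul_X_pow_le _ _).trans he0

end CommSemiring

section Field

variable {σ K : Type*} [Field K]

theorem IsHomogeneous.irreducible_of_one {l : MvPolynomial σ K} (hl : l.IsHomogeneous 1)
    (hl0 : l ≠ 0) : Irreducible l := by
  refine irreducible_of_totalDegree_eq_one (hl.totalDegree hl0) fun c hc ↦ ?_
  refine isUnit_iff_ne_zero.2 fun hc0 ↦ hl0 ?_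
  ext e
  simpa [hc0] using hc e

theorem IsHomogeneous.isUnit_of_zero {q : MvPolynomial σ K} (hq : q.IsHomogeneous 0)
    (hq0 : q ≠ 0) : IsUnit q := by
  rw [totalDegree_eq_zero_iff_eq_C.1 ((totalDegree_zero_iff_isHomogeneous σ).2 hq)] at hq0 ⊢
  exact (isUnit_iff_ne_zero.2 fun h ↦ hq0 (by rw [h, C_0])).map C

variable [IsAlgClosed K] {p : MvPolynomial (Fin 2) K}

open Polynomial in
theorem IsHomogeneous.exists_eq_linear_mul (hp : p.IsHomogeneous (n + 1)) :
    ∃ l q : MvPolynomial (Fin 2) K,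
      l.IsHomogeneous 1 ∧ l ≠ 0 ∧ q.IsHomogeneous n ∧ p = l * q := by
  set f := MvPolynomial.aeval ![(Polynomial.X : K[X]), 1] p
  obtain ⟨ℓ, g, hℓ0, hℓ, hg, hfg⟩ :
      ∃ ℓ g : K[X], ℓ ≠ 0 ∧ ℓ.natDegree ≤ 1 ∧ g.natDegree ≤ n ∧ f = ℓ * g := by
    rcases (show f.natDegree ≤ n + 1 from hp.natDegree_aeval_X_one_le).lt_or_eq with hlt | heq
    · exact ⟨1, f, one_ne_zero, by simp, by omega, (one_mul f).symm⟩
    · obtain ⟨r, hr⟩ := IsAlgClosed.exists_root f fun h ↦ by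
        simp [natDegree_eq_of_degree_eq_some h] at heq
      refine ⟨Polynomial.X - Polynomial.C r, f /ₘ (Polynomial.X - Polynomial.C r),
        X_sub_C_ne_zero r, (natDegree_X_sub_C r).le, ?_, (mul_divByMonic_eq_iff_isRoot.2 hr).symm⟩
      rw [natDegree_divByMonic _ (monic_X_sub_C r), heq, natDegree_X_sub_C]
      omega
  refine ⟨ℓ.homogenize 1, g.homogenize n, isHomogeneous_homogenize _,
    (homogenize_eq_zero_iff hℓ).not.2 hℓ0, isHomogeneous_homogenize _, ?_⟩
  rw [← homogenize_mul _ _ hℓ hg, ← hfg, add_comm 1 n, homogenize_eq_of_isHomogeneous hp rfl]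

theorem IsHomogeneous.isRelPrime_of_forall_linear {u : MvPolynomial (Fin 2) K}
    (hp : p.IsHomogeneous n) (hp0 : p ≠ 0)
    (h : ∀ l : MvPolynomial (Fin 2) K, l.IsHomogeneous 1 → l ≠ 0 → l ∣ p → ¬ l ∣ u) :
    IsRelPrime p u := by
  induction n generalizing p with
  | zero => exact (hp.isUnit_of_zero hp0).isRelPrime_left
  | succ n ih =>
    obtain ⟨l, q, hl, hl0, hq, rfl⟩ := hp.exists_eq_linear_mul
    refine IsRelPrime.mul_left
      ((hl.irreducible_of_one hl0).isRelPrime_iff_not_dvd.2 (h l hl hl0 (dvd_mul_right l q)))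
      (ih hq (right_ne_zero_of_mul hp0) fun l' hl' hl'0 hdvd ↦ ?_)
    exact h l' hl' hl'0 (hdvd.trans (dvd_mul_left q l))

end Field

end MvPolynomial

theorem not_in_span_general (m : ℕ) (hm : 2 ≤ m) (h₁ h₂ : MvPolynomial (Fin 2) ℂ)
    (hh₂ : h₂.IsHomogeneous m)
    (hnc : ∀ l : MvPolynomial (Fin 2) ℂ, l.IsHomogeneous 1 → l ≠ 0 → ¬(l ∣ h₁ ∧ l ∣ h₂))
    (l₁ l₂ q₁ q₂ : MvPolynomial (Fin 2) ℂ)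
    (hl₁ : l₁.IsHomogeneous 1) (hl₂ : l₂.IsHomogeneous 1) (hl₁0 : l₁ ≠ 0) (hl₂0 : l₂ ≠ 0)
    (hq₁ : h₁ = l₁ * q₁) (hq₂ : h₂ = l₂ * q₂) :
    ¬∃ a₁ a₂ : MvPolynomial (Fin 2) ℂ, a₁.IsHomogeneous (m - 2) ∧ a₂.IsHomogeneous (m - 2)
      ∧ q₁ * q₂ = a₁ * h₁ + a₂ * h₂ := by
  rintro ⟨a₁, a₂, ha₁, -, heq⟩
  subst hq₁ hq₂
  have hq₂0 : q₂ ≠ 0 := by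
    rintro rfl
    exact hnc l₁ hl₁ hl₁0 ⟨dvd_mul_right l₁ q₁, by simp⟩
  have hq₂_hom : q₂.IsHomogeneous (m - 1) :=
    hl₂.of_mul_left hl₂0 (by rwa [add_tsub_cancel_of_le (by omega)])
  obtain ⟨t, ht⟩ : l₂ ∣ q₂ - a₁ * l₁ :=
    ((hl₂.irreducible_of_one hl₂0).isRelPrime_iff_not_dvd.2 fun h ↦
      hnc l₂ hl₂ hl₂0 ⟨h.mul_left l₁, dvd_mul_right l₂ q₂⟩).dvd_of_dvd_mul_left
        ⟨a₂ * q₂, by linear_combination heq⟩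
  have ht_hom : t.IsHomogeneous (m - 2) := by
    refine hl₂.of_mul_left hl₂0 ?_
    rw [← ht, show 1 + (m - 2) = m - 1 by omega]
    exact hq₂_hom.sub (by simpa [show m - 2 + 1 = m - 1 by omega] using ha₁.mul hl₁)
  have hdvd : q₂ ∣ t * q₁ :=
    ⟨a₂, mul_left_cancel₀ hl₂0 (by linear_combination (-q₁) * ht + heq)⟩
  have hcop : IsRelPrime q₂ q₁ := hq₂_hom.isRelPrime_of_forall_linear hq₂0
    fun l hl hl0 h₂ h₁ ↦ hnc l hl hl0 ⟨h₁.mul_left l₁, h₂.mul_left l₂⟩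
  have ht0 : t = 0 :=
    hq₂_hom.eq_zero_of_dvd_of_lt hq₂0 ht_hom (by omega) (hcop.dvd_of_dvd_mul_right hdvd)
  rw [ht0, mul_zero, sub_eq_zero] at ht
  exact hnc l₁ hl₁ hl₁0 ⟨dvd_mul_right l₁ q₁, ⟨l₂ * a₁, by rw [ht]; ring⟩⟩

/-- Let `h₁, h₂` be binary forms of degree `m ≥ 2` with no common linear factor, and let
`l₁ ∣ h₁`, `l₂ ∣ h₂` be linear factors, say `h₁ = l₁q₁` and `h₂ = l₂q₂`. Then
`(h₁/l₁)(h₂/l₂) = q₁q₂` is not of the form `a₁h₁ + a₂h₂` with `a₁, a₂` of degree `m-2`. -/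
theorem not_in_span (m : ℕ) (hm : 2 ≤ m) (h₁ h₂ : MvPolynomial (Fin 2) ℂ)
    (hh₁ : h₁.IsHomogeneous m) (hh₂ : h₂.IsHomogeneous m)
    (hnc : ∀ l : MvPolynomial (Fin 2) ℂ, l.IsHomogeneous 1 → l ≠ 0 → ¬(l ∣ h₁ ∧ l ∣ h₂))
    (l₁ l₂ q₁ q₂ : MvPolynomial (Fin 2) ℂ)
    (hl₁ : l₁.IsHomogeneous 1) (hl₂ : l₂.IsHomogeneous 1) (hl₁0 : l₁ ≠ 0) (hl₂0 : l₂ ≠ 0)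
    (hq₁ : h₁ = l₁ * q₁) (hq₂ : h₂ = l₂ * q₂) :
    ¬∃ a₁ a₂ : MvPolynomial (Fin 2) ℂ, a₁.IsHomogeneous (m - 2) ∧ a₂.IsHomogeneous (m - 2)
      ∧ q₁ * q₂ = a₁ * h₁ + a₂ * h₂ :=
  not_in_span_general m hm h₁ h₂ hh₂ hnc l₁ l₂ q₁ q₂ hl₁ hl₂ hl₁0 hl₂0 hq₁ hq₂
end

section
/- Let W ⊆ ℂ[x,y]_m be a 2-dimensional subspace of binary forms of degree m, and let ρ be the one-parameter subgroup t ↦ diag(t^{-1}, t) of SL₂. Choose a basis f₁ = ∑ C(m,i)aᵢx^{m-i}yⁱ, f₂ = ∑ C(m,i)bᵢx^{m-i}yⁱ, let k be the least index with (a_k,b_k) ≠ (0,0) and ℓ the least index with (a_ℓ,b_ℓ) linearly independent from (a_k,b_k). Then the Hilbert–Mumford index of W in the Plücker embedding ℙ(Λ²ℂ[x,y]_m) with respect to ρ equals 2(m − k − ℓ). -/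
/-!
The Plücker coordinates of `f₁ ∧ f₂` are, up to the nonzero factors `C(m,i) C(m,j)`, the
minors `pᵢⱼ = aᵢbⱼ - aⱼbᵢ`, and `x^(m-i)yⁱ ∧ x^(m-j)yʲ` contributes `2(m-i-j)` to the
index. A nonzero minor `pᵢⱼ` with `i < j` has `k ≤ i`, since the columns before `k` vanish,
and `ℓ ≤ j`, since all columns before `ℓ` lie on the line spanned by the `k`-th column, so
any two of them are dependent. Hence `2(m-i-j) ≤ 2(m-k-ℓ)`, with equality at `pₖₗ ≠ 0`.
-/

namespace HilbertMumford

variable {ι R : Type*} [CommRing R]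

def plucker (a b : ι → R) (i j : ι) : R := a i * b j - a j * b i

theorem plucker_self (a b : ι → R) (i : ι) : plucker a b i i = 0 :=
  sub_self _

theorem plucker_eq_zero_of_left (a b : ι → R) {i : ι} (hi : a i = 0 ∧ b i = 0) (j : ι) :
    plucker a b i j = 0 := by
  simp [plucker, hi.1, hi.2]

theorem plucker_eq_zero_of_right (a b : ι → R) (i : ι) {j : ι} (hj : a j = 0 ∧ b j = 0) :
    plucker a b i j = 0 := by
  simp [plucker, hj.1, hj.2]

-- `aₖ pᵢⱼ = aᵢ pₖⱼ - aⱼ pₖᵢ`, and likewise with `b`.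
theorem plucker_eq_zero_of_plucker_eq_zero [NoZeroDivisors R] {a b : ι → R} {k i j : ι}
    (hk : ¬(a k = 0 ∧ b k = 0)) (hi : plucker a b k i = 0) (hj : plucker a b k j = 0) :
    plucker a b i j = 0 := by
  unfold plucker at *
  rcases not_and_or.mp hk with hak | hbk
  · have h : a k * (a i * b j - a j * b i) = 0 := by linear_combination a i * hj - a j * hi
    exact (mul_eq_zero.mp h).resolve_left hak
  · have h : b k * (a i * b j - a j * b i) = 0 := by linear_combination b i * hj - b j * hi
    exact (mul_eq_zero.mp h).resolve_left hbk

theorem le_left_of_plucker_ne_zero [LinearOrder ι] {a b : ι → R} {k i j : ι}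
    (hk : ∀ i < k, a i = 0 ∧ b i = 0) (hij : plucker a b i j ≠ 0) : k ≤ i :=
  not_lt.mp fun hik => hij (plucker_eq_zero_of_left a b (hk i hik) j)

theorem le_right_of_plucker_ne_zero [LinearOrder ι] {a b : ι → R} {k i j : ι}
    (hk : ∀ i < k, a i = 0 ∧ b i = 0) (hij : plucker a b i j ≠ 0) : k ≤ j :=
  not_lt.mp fun hjk => hij (plucker_eq_zero_of_right a b i (hk j hjk))

theorem le_right_of_plucker_ne_zero_of_plucker_eq_zero [LinearOrder ι] [NoZeroDivisors R]
    {a b : ι → R} {k ℓ i j : ι}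
    (hk : ¬(a k = 0 ∧ b k = 0)) (hℓ : ∀ i < ℓ, plucker a b k i = 0) (hij : i < j)
    (hp : plucker a b i j ≠ 0) : ℓ ≤ j :=
  not_lt.mp fun hjℓ =>
    hp (plucker_eq_zero_of_plucker_eq_zero hk (hℓ i (hij.trans hjℓ)) (hℓ j hjℓ))

theorem lt_of_plucker_ne_zero [LinearOrder ι] {a b : ι → R} {k ℓ : ι}
    (hk : ∀ i < k, a i = 0 ∧ b i = 0) (hkℓ : plucker a b k ℓ ≠ 0) : k < ℓ :=
  (le_right_of_plucker_ne_zero hk hkℓ).lt_of_ne fun h => hkℓ (h ▸ plucker_self a b k)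

end HilbertMumford

open HilbertMumford in
/-- Hilbert–Mumford index of a two-dimensional subspace `W = ⟨f₁, f₂⟩ ⊆ ℂ[x,y]_m`,
with `f₁ = ∑ C(m,i)aᵢx^(m-i)yⁱ`, `f₂ = ∑ C(m,i)bᵢx^(m-i)yⁱ`, with respect to the
one-parameter subgroup `ρ : t ↦ diag(t⁻¹,t)` of `SL₂`: if `k` is the least index with the
column `(aₖ,bₖ)` nonzero and `ℓ` the least index whose column is linearly independent from
the `k`-th, then `μ(W,ρ) = max {2(m-i-j) : i < j, aᵢbⱼ - aⱼbᵢ ≠ 0}` equals `2(m-k-ℓ)`. -/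
theorem hilbert_mumford_index (m : ℕ) (a b : Fin (m + 1) → ℂ) (k ℓ : Fin (m + 1))
    (hk1 : ¬(a k = 0 ∧ b k = 0)) (hk2 : ∀ i < k, a i = 0 ∧ b i = 0)
    (hl1 : a k * b ℓ - a ℓ * b k ≠ 0) (hl2 : ∀ i < ℓ, a k * b i - a i * b k = 0) :
    IsGreatest {z : ℤ | ∃ i j : Fin (m + 1), i < j ∧ a i * b j - a j * b i ≠ 0 ∧
        z = 2 * ((m : ℤ) - (i : ℕ) - (j : ℕ))}
      (2 * ((m : ℤ) - (k : ℕ) - (ℓ : ℕ))) := by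
  refine ⟨⟨k, ℓ, lt_of_plucker_ne_zero hk2 hl1, hl1, rfl⟩, ?_⟩
  rintro z ⟨i, j, hij, hp, rfl⟩
  have hki : k ≤ i := le_left_of_plucker_ne_zero hk2 hp
  have hℓj : ℓ ≤ j := le_right_of_plucker_ne_zero_of_plucker_eq_zero hk1 hl2 hij hp
  omega
end

section
/- Let f ∈ ℂ[x,y] be a binary form of degree d ≥ 3 not linearly equivalent to x^{d-1}y, and suppose g ∈ ℂ[x,y]_d is not proportional to f but ⟨g_x, g_y⟩ ⊆ ⟨f_x, f_y⟩ as subspaces of ℂ[x,y]_{d-1}. Then f is GL₂-equivalent to x^d + y^d. -/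
open MvPolynomial Matrix

/-- Substitution of a linear change of variables: `(substM M f)(x) = f(M ⬝ x)`. -/
noncomputable def substM {n : ℕ} (M : Matrix (Fin n) (Fin n) ℂ) (f : MvPolynomial (Fin n) ℂ) :
    MvPolynomial (Fin n) ℂ :=
  aeval (fun i => ∑ j, C (M i j) * X j) f

/-- Two binary forms are linearly equivalent if one is obtained from the other by an
invertible linear substitution, up to a nonzero scalar. -/
def LinEquiv (f h : MvPolynomial (Fin 2) ℂ) : Prop :=
  ∃ (M : Matrix (Fin 2) (Fin 2) ℂ) (c : ℂ), IsUnit M.det ∧ c ≠ 0 ∧ f = c • substM M h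

/-!
If `∇g = N ∇f`, comparing the two mixed partials of `g` gives a constant-coefficient operator
`c ∂₀² + (e - a) ∂₀∂₁ - b ∂₁²` annihilating `f`; it is nonzero, since otherwise `g - a f` has zero
gradient and so vanishes by Euler's identity. Over `ℂ` it factors as `∂_u ∂_w`, and taking `u`, `w`
(or `u` and a complement, when `w ∥ u`) as coordinate axes turns it into `∂₀∂₁` or `∂₀²`, so `f`
becomes `A x^d + B y^d` or `A x y^(d-1) + B y^d`. If that is a pure power `B ℓ^d`, every form whose
gradient lies on the line through `ℓ^(d-1)` is a multiple of `ℓ^d` (the mixed partials again), so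
`g` would be proportional to `f`. In the remaining cases `f ~ x^d + y^d` or `f ~ x^(d-1) y`.
-/

namespace MvPolynomial

section Derivatives

variable {R σ : Type*} [CommRing R]

theorem pderiv_pderiv_comm (i j : σ) (f : MvPolynomial σ R) :
    pderiv i (pderiv j f) = pderiv j (pderiv i f) := by
  have h : ⁅pderiv i, pderiv j⁆ = (0 : Derivation R (MvPolynomial σ R) (MvPolynomial σ R)) :=
    derivation_ext fun k => by
      classical
      rw [Derivation.commutator_apply]
      simp [pderiv_X, Pi.single_apply, apply_ite]
  have := congr($h f)
  rwa [Derivation.commutator_apply, Derivation.zero_apply, sub_eq_zero] at this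

noncomputable def gradSpan (f : MvPolynomial σ R) : Submodule R (MvPolynomial σ R) :=
  Submodule.span R (Set.range fun i => pderiv i f)

theorem gradSpan_le_iff {f : MvPolynomial σ R} {S : Submodule R (MvPolynomial σ R)} :
    gradSpan f ≤ S ↔ ∀ i, pderiv i f ∈ S := by
  rw [gradSpan, Submodule.span_le, Set.range_subset_iff]
  rfl

theorem gradSpan_eq_span_pair (f : MvPolynomial (Fin 2) R) :
    gradSpan f = Submodule.span R {pderiv 0 f, pderiv 1 f} := by
  rw [gradSpan]
  congr 1
  ext p
  simp [Fin.exists_fin_two, eq_comm]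

theorem gradSpan_C_mul_X_pow_le (B : R) (j : σ) (n : ℕ) :
    gradSpan (C B * X j ^ n) ≤ R ∙ X j ^ (n - 1) := by
  refine gradSpan_le_iff.2 fun i => Submodule.mem_span_singleton.2 ?_
  rcases eq_or_ne i j with rfl | hij
  · exact ⟨B * n, by simp [smul_eq_C_mul]; ring⟩
  · exact ⟨0, by simp [pderiv_X_of_ne hij.symm]⟩

variable [Fintype σ]

noncomputable def dirDeriv (v : σ → R) : Derivation R (MvPolynomial σ R) (MvPolynomial σ R) :=
  ∑ k, v k • pderiv k

theorem dirDeriv_apply (v : σ → R) (f : MvPolynomial σ R) :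
    dirDeriv v f = ∑ k, v k • pderiv k f := by
  rw [dirDeriv, ← Derivation.coeFnAddMonoidHom_apply, map_sum, Finset.sum_apply]
  rfl

theorem dirDeriv_X [DecidableEq σ] (v : σ → R) (j : σ) : dirDeriv v (X j) = C (v j) := by
  simp [dirDeriv_apply, pderiv_X, Pi.single_apply, smul_eq_C_mul]

theorem dirDeriv_smul (a : R) (v : σ → R) : dirDeriv (a • v) = a • dirDeriv v := by
  simp only [dirDeriv, Pi.smul_apply, Finset.smul_sum, smul_smul, smul_eq_mul]

theorem dirDeriv_mem_gradSpan (v : σ → R) (f : MvPolynomial σ R) :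
    dirDeriv v f ∈ gradSpan f := by
  rw [dirDeriv_apply]
  exact Submodule.sum_mem _ fun k _ => Submodule.smul_mem _ _ (Submodule.subset_span ⟨k, rfl⟩)

theorem dirDeriv_dirDeriv_fin_two (u w : Fin 2 → R) (f : MvPolynomial (Fin 2) R) :
    dirDeriv u (dirDeriv w f) = (u 0 * w 0) • pderiv 0 (pderiv 0 f)
      + (u 0 * w 1 + u 1 * w 0) • pderiv 0 (pderiv 1 f) + (u 1 * w 1) • pderiv 1 (pderiv 1 f) := by
  simp only [dirDeriv_apply, Fin.sum_univ_two, map_add, Derivation.map_smul]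
  rw [pderiv_pderiv_comm 1 0]
  module

end Derivatives

section Homogeneous

variable {K σ : Type*} [Field K] [CharZero K] [Fintype σ] {f : MvPolynomial σ K} {n : ℕ}

theorem IsHomogeneous.eq_zero_of_forall_pderiv_eq_zero (hf : f.IsHomogeneous n) (hn : n ≠ 0)
    (h : ∀ i, pderiv i f = 0) : f = 0 := by
  have euler := hf.sum_X_mul_pderiv
  simp only [h, mul_zero, Finset.sum_const_zero] at euler
  exact (smul_eq_zero.mp euler.symm).resolve_left hn

theorem IsHomogeneous.exists_eq_C_mul_X_pow (hf : f.IsHomogeneous n) {j : σ}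
    (h : ∀ i ≠ j, pderiv i f = 0) : ∃ c, f = C c * X j ^ n := by
  induction n generalizing f with
  | zero =>
    exact ⟨coeff 0 f, by
      simpa using totalDegree_eq_zero_iff_eq_C.mp ((totalDegree_zero_iff_isHomogeneous σ).mpr hf)⟩
  | succ n ih =>
    obtain ⟨c, hc⟩ := ih (hf.pderiv (i := j))
      fun i hi => by rw [pderiv_pderiv_comm, h i hi, map_zero]
    have euler := hf.sum_X_mul_pderiv
    rw [Finset.sum_eq_single j (fun i _ hi => by rw [h i hi, mul_zero]) (by simp), hc,
      ← Nat.cast_smul_eq_nsmul K, smul_eq_C_mul, mul_left_comm, ← pow_succ'] at euler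
    have hn : ((n + 1 : ℕ) : K) ≠ 0 := Nat.cast_ne_zero.mpr n.succ_ne_zero
    refine ⟨c / (n + 1 : ℕ), ?_⟩
    rw [div_eq_inv_mul, map_mul, mul_assoc, euler, ← mul_assoc, ← map_mul, inv_mul_cancel₀ hn,
      map_one, one_mul]

theorem IsHomogeneous.exists_eq_C_mul_X_pow_of_gradSpan_le (hf : f.IsHomogeneous n) (hn : 2 ≤ n)
    {j : σ} (h : gradSpan f ≤ K ∙ X j ^ (n - 1)) : ∃ c, f = C c * X j ^ n := by
  rw [gradSpan_le_iff] at h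
  refine hf.exists_eq_C_mul_X_pow fun i hi => ?_
  obtain ⟨a, ha⟩ := Submodule.mem_span_singleton.1 (h i)
  obtain ⟨b, hb⟩ := Submodule.mem_span_singleton.1 (h j)
  have hcomm := pderiv_pderiv_comm j i f
  rw [← ha, ← hb] at hcomm
  simp [pderiv_X_of_ne hi.symm] at hcomm
  rw [← ha, hcomm.resolve_right (by omega), zero_smul]

end Homogeneous

section BinaryForms

variable {K : Type*} [Field K] [CharZero K] {f : MvPolynomial (Fin 2) K} {n : ℕ}

theorem IsHomogeneous.exists_eq_C_mul_X_pow_add_C_mul_X_pow (hf : f.IsHomogeneous n)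
    (hn : n ≠ 0) (h : pderiv 0 (pderiv 1 f) = 0) :
    ∃ A B, f = C A * X 0 ^ n + C B * X 1 ^ n := by
  have h' : pderiv 1 (pderiv 0 f) = 0 := by rw [pderiv_pderiv_comm, h]
  obtain ⟨a, ha⟩ := (hf.pderiv (i := 0)).exists_eq_C_mul_X_pow (j := 0)
    (by simp [Fin.forall_fin_two, h'])
  obtain ⟨b, hb⟩ := (hf.pderiv (i := 1)).exists_eq_C_mul_X_pow (j := 1)
    (by simp [Fin.forall_fin_two, h])
  have euler := hf.sum_X_mul_pderiv
  rw [Fin.sum_univ_two, ha, hb, ← Nat.cast_smul_eq_nsmul K, smul_eq_C_mul, mul_left_comm,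
    ← pow_succ', mul_left_comm (X 1), ← pow_succ',
    Nat.sub_add_cancel (Nat.one_le_iff_ne_zero.2 hn)] at euler
  have hn' : (n : K) ≠ 0 := Nat.cast_ne_zero.2 hn
  refine ⟨a / n, b / n, mul_left_cancel₀ (mt C_eq_zero.1 hn') ?_⟩
  rw [← euler]
  simp only [mul_add, ← mul_assoc, ← map_mul, mul_div_cancel₀ _ hn']

theorem IsHomogeneous.exists_eq_C_mul_X_mul_X_pow_add_C_mul_X_pow (hf : f.IsHomogeneous n)
    (hn : n ≠ 0) (h : pderiv 0 (pderiv 0 f) = 0) :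
    ∃ A B, f = C A * (X 0 * X 1 ^ (n - 1)) + C B * X 1 ^ n := by
  obtain ⟨a, ha⟩ := (hf.pderiv (i := 0)).exists_eq_C_mul_X_pow (j := 1)
    (by simp [Fin.forall_fin_two, h])
  have hxy : (X 0 * X 1 ^ (n - 1) : MvPolynomial (Fin 2) K).IsHomogeneous n := by
    simpa [Nat.add_sub_cancel' (Nat.one_le_iff_ne_zero.2 hn)] using
      (isHomogeneous_X K 0).mul ((isHomogeneous_X K 1).pow (n - 1))
  obtain ⟨B, hB⟩ := (hf.sub (hxy.C_mul a)).exists_eq_C_mul_X_pow (j := 1)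
    (by simp [Fin.forall_fin_two, ha])
  exact ⟨a, B, by rw [← hB]; ring⟩

end BinaryForms

end MvPolynomial

theorem IsAlgClosed.exists_linear_factors_binaryQuadratic {K : Type*} [Field K] [IsAlgClosed K]
    (a b c : K) :
    ∃ u w : Fin 2 → K, u 0 * w 0 = a ∧ u 0 * w 1 + u 1 * w 0 = b ∧ u 1 * w 1 = c := by
  rcases eq_or_ne a 0 with rfl | ha
  · exact ⟨![0, 1], ![b, c], by simp⟩
  -- `a x² + b x y + c y² = (a x + (b - a t) y) (x + t y)` for a root `t` of `a t² - b t + c`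
  obtain ⟨t, ht⟩ := IsAlgClosed.exists_root (Polynomial.C a * Polynomial.X ^ 2
    + Polynomial.C (-b) * Polynomial.X + Polynomial.C c)
    (by rw [Polynomial.degree_quadratic ha]; decide)
  simp only [Polynomial.IsRoot, Polynomial.eval_add, Polynomial.eval_mul, Polynomial.eval_C,
    Polynomial.eval_pow, Polynomial.eval_X] at ht
  exact ⟨![a, b - a * t], ![1, t], by simp, by simp, by simp; linear_combination -ht⟩

theorem exists_linearIndependent_pair {K : Type*} [Field K] {u : Fin 2 → K} (hu : u ≠ 0) :
    ∃ v, LinearIndependent K ![u, v] := by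
  by_cases h0 : u 0 = 0
  · refine ⟨Pi.single 0 1, (LinearIndependent.pair_iff' hu).2 fun a ha => ?_⟩
    simpa [h0] using congrFun ha 0
  · refine ⟨Pi.single 1 1, (LinearIndependent.pair_iff' hu).2 fun a ha => ?_⟩
    have ha0 : a = 0 := by simpa [h0] using congrFun ha 0
    simpa [ha0] using congrFun ha 1

theorem isUnit_det_transpose_of_linearIndependent {K : Type*} [Field K] {u v : Fin 2 → K}
    (h : LinearIndependent K ![u, v]) : IsUnit (of ![u, v])ᵀ.det :=
  (isUnit_iff_isUnit_det _).1 (linearIndependent_cols_iff_isUnit.1 h)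

section Substitution

variable {n : ℕ} {M : Matrix (Fin n) (Fin n) ℂ}

noncomputable def substAlgHom (M : Matrix (Fin n) (Fin n) ℂ) :
    MvPolynomial (Fin n) ℂ →ₐ[ℂ] MvPolynomial (Fin n) ℂ :=
  aeval fun i => ∑ j, C (M i j) * X j

theorem substAlgHom_apply (M : Matrix (Fin n) (Fin n) ℂ) (f : MvPolynomial (Fin n) ℂ) :
    substAlgHom M f = substM M f :=
  rfl

theorem substM_zero (M : Matrix (Fin n) (Fin n) ℂ) : substM M 0 = 0 :=
  map_zero (substAlgHom M)

theorem substM_smul (M : Matrix (Fin n) (Fin n) ℂ) (c : ℂ) (f : MvPolynomial (Fin n) ℂ) :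
    substM M (c • f) = c • substM M f :=
  map_smul (substAlgHom M) c f

theorem substM_C (M : Matrix (Fin n) (Fin n) ℂ) (a : ℂ) : substM M (C a) = C a :=
  aeval_C _ _

theorem substM_X (M : Matrix (Fin n) (Fin n) ℂ) (i : Fin n) :
    substM M (X i) = ∑ j, C (M i j) * X j :=
  aeval_X _ _

theorem substM_substM (M N : Matrix (Fin n) (Fin n) ℂ) (f : MvPolynomial (Fin n) ℂ) :
    substM M (substM N f) = substM (N * M) f := by
  have h : (substAlgHom M).comp (substAlgHom N) = substAlgHom (N * M) := algHom_ext fun i => by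
    simp only [AlgHom.comp_apply, substAlgHom_apply, substM_X, map_sum, map_mul, substM_C,
      Finset.mul_sum, Matrix.mul_apply, Finset.sum_mul, mul_assoc]
    exact Finset.sum_comm
  exact congr($h f)

theorem substM_one (f : MvPolynomial (Fin n) ℂ) : substM 1 f = f := by
  have h : (fun i => ∑ j, C ((1 : Matrix (Fin n) (Fin n) ℂ) i j) * X j) = X := by
    funext i
    simp [Matrix.one_apply]
  rw [substM, h, aeval_X_left_apply]

theorem substM_inv_substM (hM : IsUnit M.det) (f : MvPolynomial (Fin n) ℂ) :
    substM M⁻¹ (substM M f) = f := by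
  rw [substM_substM, mul_nonsing_inv _ hM, substM_one]

theorem substM_substM_inv (hM : IsUnit M.det) (f : MvPolynomial (Fin n) ℂ) :
    substM M (substM M⁻¹ f) = f := by
  rw [substM_substM, nonsing_inv_mul _ hM, substM_one]

theorem substM_injective (hM : IsUnit M.det) : Function.Injective (substM M) :=
  Function.LeftInverse.injective (substM_inv_substM hM)

theorem MvPolynomial.IsHomogeneous.substM {d : ℕ} (M : Matrix (Fin n) (Fin n) ℂ)
    {f : MvPolynomial (Fin n) ℂ} (hf : f.IsHomogeneous d) : (substM M f).IsHomogeneous d := by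
  have h := hf.aeval (fun i => ∑ j, C (M i j) * X j) (n := 1) fun i =>
    IsHomogeneous.sum _ _ _ fun j _ => (isHomogeneous_X ℂ j).C_mul (M i j)
  rwa [one_mul] at h

theorem pderiv_substM (M : Matrix (Fin n) (Fin n) ℂ) (f : MvPolynomial (Fin n) ℂ) (i : Fin n) :
    pderiv i (substM M f) = substM M (dirDeriv (Mᵀ i) f) := by
  induction f using MvPolynomial.induction_on with
  | C a => simp [← substAlgHom_apply]
  | add p q hp hq => simp only [← substAlgHom_apply, map_add] at *; rw [hp, hq]
  | mul_X p j hp =>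
    simp only [← substAlgHom_apply] at hp ⊢
    simp only [map_mul, hp, Derivation.leibniz, dirDeriv_X, smul_eq_mul, map_add]
    simp only [substAlgHom_apply, substM_X, substM_C, map_sum, pderiv_C_mul, pderiv_X,
      Pi.single_apply]
    simp

theorem gradSpan_substM (hM : IsUnit M.det) (f : MvPolynomial (Fin n) ℂ) :
    gradSpan (substM M f) = (gradSpan f).map (substAlgHom M).toLinearMap := by
  have hle : ∀ (N : Matrix (Fin n) (Fin n) ℂ) (p : MvPolynomial (Fin n) ℂ),
      gradSpan (substM N p) ≤ (gradSpan p).map (substAlgHom N).toLinearMap := fun N p =>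
    gradSpan_le_iff.2 fun i => by
      rw [pderiv_substM]
      exact Submodule.mem_map_of_mem (dirDeriv_mem_gradSpan _ p)
  refine (hle M f).antisymm ?_
  rintro _ ⟨p, hp, rfl⟩
  rw [← substM_inv_substM hM f] at hp
  obtain ⟨q, hq, rfl⟩ := hle M⁻¹ (substM M f) hp
  simpa [substAlgHom_apply, substM_substM_inv hM] using hq

theorem exists_eq_smul_of_substM_eq_C_mul_X_pow {d : ℕ} (hd : 2 ≤ d)
    {f g : MvPolynomial (Fin n) ℂ} (hg : g.IsHomogeneous d) (hle : gradSpan g ≤ gradSpan f)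
    (hM : IsUnit M.det) {B : ℂ} {j : Fin n} (hfM : substM M f = C B * X j ^ d) :
    ∃ c : ℂ, g = c • f := by
  have hleM : gradSpan (substM M g) ≤ gradSpan (substM M f) := by
    rw [gradSpan_substM hM, gradSpan_substM hM]
    exact Submodule.map_mono hle
  obtain ⟨β, hβ⟩ := (hg.substM M).exists_eq_C_mul_X_pow_of_gradSpan_le hd
    (hleM.trans (hfM ▸ gradSpan_C_mul_X_pow_le B j d))
  rcases eq_or_ne B 0 with rfl | hB
  · obtain rfl : f = 0 := substM_injective hM (by rw [hfM, map_zero, zero_mul, substM_zero])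
    refine ⟨0, (zero_smul ℂ (0 : MvPolynomial (Fin n) ℂ)).symm ▸ ?_⟩
    refine hg.eq_zero_of_forall_pderiv_eq_zero (by omega) fun i => ?_
    simpa [gradSpan, Submodule.span_eq_bot.2] using gradSpan_le_iff.1 hle i
  · refine ⟨β / B, substM_injective hM ?_⟩
    rw [hβ, substM_smul, hfM, smul_eq_C_mul, ← mul_assoc, ← map_mul, div_mul_cancel₀ _ hB]

end Substitution

theorem exists_dirDeriv_dirDeriv_eq_zero_of_gradSpan_le {d : ℕ} (hd : d ≠ 0)
    {f g : MvPolynomial (Fin 2) ℂ} (hf : f.IsHomogeneous d) (hg : g.IsHomogeneous d)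
    (hle : gradSpan g ≤ gradSpan f) (hprop : ¬∃ c : ℂ, g = c • f) :
    ∃ u w : Fin 2 → ℂ, u ≠ 0 ∧ w ≠ 0 ∧ dirDeriv u (dirDeriv w f) = 0 := by
  rw [gradSpan_le_iff, gradSpan_eq_span_pair] at hle
  obtain ⟨a, b, hab⟩ := Submodule.mem_span_pair.1 (hle 0)
  obtain ⟨c, e, hce⟩ := Submodule.mem_span_pair.1 (hle 1)
  have hrel : c • pderiv 0 (pderiv 0 f) + (e - a) • pderiv 0 (pderiv 1 f)
      + (-b) • pderiv 1 (pderiv 1 f) = 0 := by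
    have hcomm := pderiv_pderiv_comm 0 1 g
    rw [← hab, ← hce] at hcomm
    simp only [map_add, Derivation.map_smul, pderiv_pderiv_comm 1 0 f] at hcomm
    linear_combination (norm := module) hcomm
  by_cases htriv : c = 0 ∧ e - a = 0 ∧ -b = 0
  · obtain ⟨rfl, hea, hb⟩ := htriv
    obtain rfl := sub_eq_zero.1 hea
    obtain rfl := neg_eq_zero.1 hb
    refine (hprop ⟨e, sub_eq_zero.1 ?_⟩).elim
    refine (hg.sub (smul_eq_C_mul f e ▸ hf.C_mul e)).eq_zero_of_forall_pderiv_eq_zero hd ?_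
    simp [Fin.forall_fin_two, ← hab, ← hce]
  obtain ⟨u, w, h0, h1, h2⟩ := IsAlgClosed.exists_linear_factors_binaryQuadratic c (e - a) (-b)
  refine ⟨u, w, ?_, ?_, ?_⟩
  · rintro rfl
    exact htriv ⟨by simp [← h0], by simp [← h1], by simp [← h2]⟩
  · rintro rfl
    exact htriv ⟨by simp [← h0], by simp [← h1], by simp [← h2]⟩
  · rw [dirDeriv_dirDeriv_fin_two, h0, h1, h2, hrel]

theorem exists_substM_eq_of_dirDeriv_dirDeriv_eq_zero {d : ℕ} (hd : d ≠ 0)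
    {f : MvPolynomial (Fin 2) ℂ} (hf : f.IsHomogeneous d) {u w : Fin 2 → ℂ} (hu : u ≠ 0)
    (hw : w ≠ 0) (h : dirDeriv u (dirDeriv w f) = 0) :
    ∃ M : Matrix (Fin 2) (Fin 2) ℂ, IsUnit M.det ∧ ∃ A B : ℂ,
      substM M f = C A * X 0 ^ d + C B * X 1 ^ d ∨
      substM M f = C A * (X 0 * X 1 ^ (d - 1)) + C B * X 1 ^ d := by
  by_cases huw : LinearIndependent ℂ ![u, w]
  · obtain ⟨A, B, hAB⟩ := (hf.substM (of ![u, w])ᵀ).exists_eq_C_mul_X_pow_add_C_mul_X_pow hd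
      (by rw [pderiv_substM, pderiv_substM]; exact (congrArg _ h).trans (substM_zero _))
    exact ⟨_, isUnit_det_transpose_of_linearIndependent huw, A, B, Or.inl hAB⟩
  rw [LinearIndependent.pair_iff' hu] at huw
  push Not at huw
  obtain ⟨κ, rfl⟩ := huw
  have hκ : κ ≠ 0 := by
    rintro rfl
    exact hw (zero_smul _ _)
  have huu : dirDeriv u (dirDeriv u f) = 0 := by
    rw [dirDeriv_smul, Derivation.smul_apply, Derivation.map_smul, smul_eq_zero] at h
    exact h.resolve_left hκ
  obtain ⟨v, huv⟩ := exists_linearIndependent_pair hu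
  obtain ⟨A, B, hAB⟩ :=
    (hf.substM (of ![u, v])ᵀ).exists_eq_C_mul_X_mul_X_pow_add_C_mul_X_pow hd
      (by rw [pderiv_substM, pderiv_substM]; exact (congrArg _ huu).trans (substM_zero _))
  exact ⟨_, isUnit_det_transpose_of_linearIndependent huv, A, B, Or.inr hAB⟩

theorem LinEquiv.of_substM {f h : MvPolynomial (Fin 2) ℂ} {M : Matrix (Fin 2) (Fin 2) ℂ}
    (hM : IsUnit M.det) (hfh : LinEquiv (substM M f) h) : LinEquiv f h := by
  obtain ⟨N, c, hN, hc, hMN⟩ := hfh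
  refine ⟨N * M⁻¹, c, ?_, hc, ?_⟩
  · rw [det_mul]
    exact hN.mul (isUnit_nonsing_inv_det M hM)
  · rw [← substM_substM, ← substM_smul, ← hMN, substM_inv_substM hM]

theorem linEquiv_C_mul_X_pow_add_C_mul_X_pow {d : ℕ} (hd : d ≠ 0) {A B : ℂ} (hA : A ≠ 0)
    (hB : B ≠ 0) : LinEquiv (C A * X 0 ^ d + C B * X 1 ^ d) (X 0 ^ d + X 1 ^ d) := by
  obtain ⟨a, rfl⟩ := IsAlgClosed.exists_pow_nat_eq A (Nat.pos_of_ne_zero hd)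
  obtain ⟨b, rfl⟩ := IsAlgClosed.exists_pow_nat_eq B (Nat.pos_of_ne_zero hd)
  refine ⟨diagonal ![a, b], 1, ?_, one_ne_zero, ?_⟩
  · simpa [det_diagonal, hd] using And.intro hA hB
  · rw [one_smul, ← substAlgHom_apply]
    simp only [map_add, map_pow, substAlgHom_apply, substM_X, diagonal_apply]
    simp [mul_pow]

theorem linEquiv_C_mul_X_mul_X_pow_add_C_mul_X_pow {d : ℕ} (hd : d ≠ 0) {A : ℂ} (hA : A ≠ 0)
    (B : ℂ) : LinEquiv (C A * (X 0 * X 1 ^ (d - 1)) + C B * X 1 ^ d) (X 0 ^ (d - 1) * X 1) := by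
  refine ⟨!![0, 1; A, B], 1, by simpa [det_fin_two_of] using hA, one_ne_zero, ?_⟩
  rw [one_smul, ← substAlgHom_apply]
  simp only [map_mul, map_pow, substAlgHom_apply, substM_X, Fin.sum_univ_two]
  obtain ⟨e, rfl⟩ := Nat.exists_eq_succ_of_ne_zero hd
  simp [pow_succ]
  ring

/-- If `f ∈ ℂ[x,y]_d` (`d ≥ 3`) is not linearly equivalent to `x^(d-1)y` and
`⟨g_x, g_y⟩ ⊆ ⟨f_x, f_y⟩` for some `g ∈ ℂ[x,y]_d` not proportional to `f`, then `f` is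
linearly equivalent to `x^d + y^d`. -/
theorem gradient_span_containment (d : ℕ) (hd : 3 ≤ d) (f g : MvPolynomial (Fin 2) ℂ)
    (hf : f.IsHomogeneous d) (hg : g.IsHomogeneous d)
    (hnot : ¬LinEquiv f (X 0 ^ (d - 1) * X 1))
    (hprop : ¬∃ c : ℂ, g = c • f)
    (hx : (pderiv (0 : Fin 2) g) ∈ Submodule.span ℂ {pderiv (0 : Fin 2) f, pderiv (1 : Fin 2) f})
    (hy : (pderiv (1 : Fin 2) g) ∈ Submodule.span ℂ {pderiv (0 : Fin 2) f, pderiv (1 : Fin 2) f}) :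
    LinEquiv f (X 0 ^ d + X 1 ^ d) := by
  have hle : gradSpan g ≤ gradSpan f := by
    rw [gradSpan_le_iff, Fin.forall_fin_two, gradSpan_eq_span_pair]
    exact ⟨hx, hy⟩
  have hpow : ∀ M : Matrix (Fin 2) (Fin 2) ℂ, IsUnit M.det → ∀ B j, substM M f ≠ C B * X j ^ d :=
    fun M hM B j hfM => hprop (exists_eq_smul_of_substM_eq_C_mul_X_pow (by omega) hg hle hM hfM)
  obtain ⟨u, w, hu, hw, hfuw⟩ :=
    exists_dirDeriv_dirDeriv_eq_zero_of_gradSpan_le (by omega) hf hg hle hprop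
  obtain ⟨M, hM, A, B, hfM | hfM⟩ :=
    exists_substM_eq_of_dirDeriv_dirDeriv_eq_zero (by omega) hf hu hw hfuw
  · have hA : A ≠ 0 := fun hA => hpow M hM B 1 (by simp [hfM, hA])
    have hB : B ≠ 0 := fun hB => hpow M hM A 0 (by simp [hfM, hB])
    exact LinEquiv.of_substM hM (hfM ▸ linEquiv_C_mul_X_pow_add_C_mul_X_pow (by omega) hA hB)
  · have hA : A ≠ 0 := fun hA => hpow M hM B 1 (by simp [hfM, hA])
    exact (hnot (LinEquiv.of_substM hM
      (hfM ▸ linEquiv_C_mul_X_mul_X_pow_add_C_mul_X_pow (by omega) hA B))).elim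
end

section
/- Let a₁,…,a_n be nonzero complex numbers, d ≥ 3, and f = a₁x₁^d + ⋯ + a_n x_n^d. Then the associated form of f is A(f)(y₁,…,y_n) = (1/(a₁⋯a_n)) · ((n(d−2))!/(d!)^n) · (y₁⋯y_n)^{d-2}. -/
open MvPolynomial

noncomputable def hess {n : ℕ} (f : MvPolynomial (Fin n) ℂ) : MvPolynomial (Fin n) ℂ :=
  (Matrix.of fun i j : Fin n => pderiv i (pderiv j f)).det

noncomputable def jacDet {n : ℕ} (f : Fin n → MvPolynomial (Fin n) ℂ) : MvPolynomial (Fin n) ℂ :=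
  (Matrix.of fun i j : Fin n => pderiv j (f i)).det

noncomputable def jacIdeal {n : ℕ} (f : MvPolynomial (Fin n) ℂ) : Ideal (MvPolynomial (Fin n) ℂ) :=
  Ideal.span (Set.range fun i => pderiv i f)

/-- `Af` is the associated form of a nondegenerate form `f` of degree `d` in `n` variables:
it is homogeneous of degree `n*(d-2)` and satisfies the defining identity
`(y₁x̄₁ + ⋯ + yₙx̄ₙ)^(n(d-2)) = Af(y) ⬝ hess(f)‾` in the Milnor algebra
`M(f) = ℂ[x]/(f_{x₁},…,f_{xₙ})`, for every `y ∈ ℂⁿ`. -/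
def IsAssociatedForm (n d : ℕ) (f Af : MvPolynomial (Fin n) ℂ) : Prop :=
  Af.IsHomogeneous (n * (d - 2)) ∧ ∀ y : Fin n → ℂ,
    Ideal.Quotient.mk (jacIdeal f) ((∑ i, C (y i) * X i) ^ (n * (d - 2)))
      = Ideal.Quotient.mk (jacIdeal f) (C (eval y Af) * hess f)

/-! For `f = ∑ aᵢ xᵢ^d` the Jacobian ideal is the monomial ideal `(x₁^(d-1), …, xₙ^(d-1))` and the
Hessian is the monomial `∏ d(d-1)aᵢ xᵢ^(d-2)`. In the multinomial expansion of
`(∑ yᵢxᵢ)^(n(d-2))` every term except the one with all exponents equal to `d-2` has some exponent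
`≥ d-1`, so it vanishes in the Milnor algebra; the surviving term is
`(n(d-2))!/((d-2)!)^n · ∏ yᵢ^(d-2) xᵢ^(d-2)`, and dividing by the Hessian gives the coefficient. -/

open Finset
open scoped Nat

theorem Ideal.span_range_isUnit_mul {α ι : Type*} [CommSemiring α] {u g : ι → α}
    (hu : ∀ i, IsUnit (u i)) :
    Ideal.span (Set.range fun i => u i * g i) = Ideal.span (Set.range g) := by
  simp only [Ideal.span_range_eq_iSup, Ideal.span_singleton_mul_left_unit (hu _)]

theorem Nat.multinomial_const_mul_factorial_pow {ι : Type*} (s : Finset ι) (m : ℕ) :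
    Nat.multinomial s (fun _ => m) * m ! ^ #s = (#s * m)! := by
  simpa [mul_comm] using Nat.multinomial_spec s (fun _ => m)

theorem Nat.exists_lt_of_sum_eq_card_mul {ι : Type*} [Fintype ι] {k : ι → ℕ} {m : ℕ}
    (hsum : ∑ i, k i = Fintype.card ι * m) (hk : k ≠ fun _ => m) : ∃ i, m < k i := by
  by_contra! hle
  refine hk (funext fun i => (sum_eq_sum_iff_of_le fun j _ => hle j).mp ?_ i (mem_univ i))
  simp [hsum, mul_comm]

namespace MvPolynomial

section CommSemiring

variable {R σ : Type*} [CommSemiring R] [Fintype σ]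

theorem isHomogeneous_prod_X_pow (m : ℕ) :
    ((∏ i, X i : MvPolynomial σ R) ^ m).IsHomogeneous (Fintype.card σ * m) := by
  simpa using (IsHomogeneous.prod univ (fun i => (X i : MvPolynomial σ R)) (fun _ => 1)
    fun i _ => isHomogeneous_X _ _).pow m

variable [DecidableEq σ]

theorem pderiv_sum_C_mul_X_pow (a : σ → R) (d : ℕ) (i : σ) :
    pderiv i (∑ j, C (a j) * X j ^ d) = C (d * a i) * X i ^ (d - 1) := by
  rw [map_sum, sum_eq_single i]
  · rw [pderiv_C_mul, pderiv_pow, pderiv_X_self, mul_one, C_mul, map_natCast]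
    ring
  · intro j _ hj
    rw [pderiv_C_mul, pderiv_pow, pderiv_X_of_ne hj, mul_zero, mul_zero]
  · simp

end CommSemiring

section CommRing

variable {R σ : Type*} [CommRing R] [Fintype σ] [DecidableEq σ]

theorem mk_span_X_pow_succ_sum_C_mul_X_pow (y : σ → R) (m : ℕ) :
    Ideal.Quotient.mk (Ideal.span (Set.range fun i => (X i : MvPolynomial σ R) ^ (m + 1)))
        ((∑ i, C (y i) * X i) ^ (Fintype.card σ * m))
      = Ideal.Quotient.mk _ (C (Nat.multinomial univ (fun _ : σ => m) * ∏ i, y i ^ m)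
          * ∏ i, (X i : MvPolynomial σ R) ^ m) := by
  have hconst : (fun _ : σ => m) ∈ piAntidiag univ (Fintype.card σ * m) := by
    simp [mem_piAntidiag, mul_comm]
  rw [sum_pow_eq_sum_piAntidiag, ← add_sum_erase _ _ hconst, map_add,
    Ideal.Quotient.eq_zero_iff_mem.2 (Ideal.sum_mem _ fun k hk => ?_), add_zero]
  · simp only [mul_pow, prod_mul_distrib, map_mul, map_natCast, map_prod, map_pow, mul_assoc]
  obtain ⟨hk, hsum⟩ := mem_erase.1 hk
  obtain ⟨i, hi⟩ := Nat.exists_lt_of_sum_eq_card_mul (mem_piAntidiag.1 hsum).1 hk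
  refine Ideal.mem_of_dvd _ ?_ (Ideal.subset_span ⟨i, rfl⟩)
  refine dvd_mul_of_dvd_right (dvd_trans ?_ (dvd_prod_of_mem _ (mem_univ i))) _
  rw [mul_pow]
  exact dvd_mul_of_dvd_right (pow_dvd_pow _ hi) _

end CommRing

end MvPolynomial

section Fermat

variable {n : ℕ} (a : Fin n → ℂ) (d : ℕ)

theorem jacIdeal_sum_C_mul_X_pow (ha : ∀ i, a i ≠ 0) (hd : d ≠ 0) :
    jacIdeal (∑ i, C (a i) * X i ^ d) = Ideal.span (Set.range fun i => X i ^ (d - 1)) := by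
  simp only [jacIdeal, pderiv_sum_C_mul_X_pow]
  exact Ideal.span_range_isUnit_mul fun i =>
    (isUnit_iff_ne_zero.2 (mul_ne_zero (Nat.cast_ne_zero.2 hd) (ha i))).map C

theorem hess_sum_C_mul_X_pow :
    hess (∑ i, C (a i) * X i ^ d)
      = C (((d * (d - 1) : ℕ) : ℂ) ^ n * ∏ i, a i) * ∏ i, X i ^ (d - 2) := by
  have hdiag : (Matrix.of fun i j : Fin n => pderiv i (pderiv j (∑ k, C (a k) * X k ^ d)))
      = Matrix.diagonal fun i => C (((d * (d - 1) : ℕ) : ℂ) * a i) * X i ^ (d - 2) := by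
    refine Matrix.ext fun i j => ?_
    rw [Matrix.of_apply, pderiv_sum_C_mul_X_pow, pderiv_C_mul, pderiv_pow]
    obtain rfl | hij := eq_or_ne i j
    · rw [Matrix.diagonal_apply_eq, pderiv_X_self, Nat.sub_sub, C_mul, C_mul, map_natCast,
        map_natCast]
      push_cast
      ring
    · rw [Matrix.diagonal_apply_ne _ hij, pderiv_X_of_ne hij.symm, mul_zero, mul_zero]
  rw [hess, hdiag, Matrix.det_diagonal, prod_mul_distrib, ← map_prod, prod_mul_distrib,
    prod_const, Finset.card_univ, Fintype.card_fin]

end Fermat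

theorem associatedForm_fermat_general (n d : ℕ) (hd : 3 ≤ d)
    (a : Fin n → ℂ) (ha : ∀ i, a i ≠ 0) :
    IsAssociatedForm n d (∑ i, C (a i) * X i ^ d)
      (C ((∏ i, a i)⁻¹ * ((n * (d - 2)).factorial : ℂ) / ((d.factorial : ℂ)) ^ n)
        * (∏ i, X i) ^ (d - 2)) := by
  obtain ⟨m, rfl⟩ : ∃ m, d = m + 2 := ⟨d - 2, by omega⟩
  refine ⟨?_, fun y => ?_⟩
  · simpa using (isHomogeneous_prod_X_pow (σ := Fin n) (m + 2 - 2)).C_mul _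
  have hexpand := mk_span_X_pow_succ_sum_C_mul_X_pow y m
  rw [Fintype.card_fin] at hexpand
  rw [Ideal.Quotient.eq, jacIdeal_sum_C_mul_X_pow a _ ha (by omega), ← Ideal.Quotient.eq,
    hess_sum_C_mul_X_pow, Nat.add_sub_cancel]
  refine hexpand.trans (congrArg _ ?_)
  rw [eval_mul, eval_C, eval_pow, eval_prod, ← mul_assoc, ← C_mul]
  congr 2
  have hmultinomial := Nat.multinomial_const_mul_factorial_pow (univ : Finset (Fin n)) m
  rw [card_univ, Fintype.card_fin] at hmultinomial
  have hprod : ∏ i, a i ≠ 0 := prod_ne_zero_iff.2 fun i _ => ha i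
  have hfactorial : (m + 2)! = (m + 2) * (m + 1) * m ! := by
    rw [Nat.factorial_succ, Nat.factorial_succ, mul_assoc]
  have hfactorial_ne : ((m + 2)! : ℂ) ≠ 0 := Nat.cast_ne_zero.2 (Nat.factorial_ne_zero _)
  simp only [← hmultinomial, eval_X, prod_pow]
  field_simp
  rw [hfactorial]
  push_cast [mul_pow]
  ring

/-- For `f = a₁x₁^d + ⋯ + aₙxₙ^d` with all `aᵢ ≠ 0` and `d ≥ 3`, the associated form of `f`
is `A(f)(y) = (1/(a₁⋯aₙ)) · ((n(d-2))!/(d!)^n) · (y₁⋯yₙ)^(d-2)`. -/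
theorem associatedForm_fermat (n d : ℕ) (hn : 2 ≤ n) (hd : 3 ≤ d)
    (a : Fin n → ℂ) (ha : ∀ i, a i ≠ 0) :
    IsAssociatedForm n d (∑ i, C (a i) * X i ^ d)
      (C ((∏ i, a i)⁻¹ * ((n * (d - 2)).factorial : ℂ) / ((d.factorial : ℂ)) ^ n)
        * (∏ i, X i) ^ (d - 2)) :=
  associatedForm_fermat_general n d hd a ha
end
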